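/- arXiv:2002.04336 — 5 statements merged into one kernel-verified Lean document; each statement's English description precedes it below -/
import Mathlib

section
/- Let M be a commutative s-Noetherian monoid (every ascending chain of ideals stabilises, equivalently every ideal is finitely generated) and S ⊆ M a submonoid. For every ideal 𝔪 of M there exists an element s ∈ S such that f⁻¹(f⁎(𝔪)) = (𝔪 : s), where f : M → S⁻¹M is the localisation map and f⁎(𝔪) the ideal of S⁻¹M generated by f(𝔪). -/
/-! The preimage of the extended ideal is the `S`-saturation `{x | ∃ s ∈ S, s * x ∈ m}` of `m`.
This is again an ideal, hence generated by finitely many `t`, each with a witness `s_t ∈ S`; the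
product of the `s_t` is a single `s ∈ S` carrying every generator, hence the whole saturation,
into `m`. -/

def IsRightIdeal {M : Type*} [Monoid M] (I : Set M) : Prop :=
  ∀ m ∈ I, ∀ x : M, m * x ∈ I

def resid {M : Type*} [Monoid M] (I : Set M) (a : M) : Set M := {x | a * x ∈ I}


def locPush {M : Type*} [CommMonoid M] (S : Submonoid M) (A : Set M) :
    Set (Localization S) :=
  {y | ∃ x ∈ A, ∃ n : Localization S, y = Localization.mk x 1 * n}

def locMap {M : Type*} [CommMonoid M] (S : Submonoid M) : M → Localization S :=
  fun m => Localization.mk m 1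

def saturation {M : Type*} [Monoid M] (S : Submonoid M) (m : Set M) : Set M :=
  {x | ∃ s ∈ S, s * x ∈ m}

section

variable {M : Type*} [Monoid M] {S : Submonoid M} {m : Set M}

theorem IsRightIdeal.saturation (hm : IsRightIdeal m) (S : Submonoid M) :
    IsRightIdeal (saturation S m) := by
  rintro x ⟨s, hs, hsx⟩ y
  exact ⟨s, hs, mul_assoc s x y ▸ hm _ hsx y⟩

theorem resid_subset_saturation {s : M} (hs : s ∈ S) : resid m s ⊆ saturation S m :=
  fun _ hx => ⟨s, hs, hx⟩

end

section

variable {M : Type*} [CommMonoid M] {S : Submonoid M} {m : Set M}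

theorem exists_mem_forall_mul_mem (hm : IsRightIdeal m) (T : Finset M)
    (hT : ∀ t ∈ T, ∃ s ∈ S, s * t ∈ m) : ∃ s ∈ S, ∀ t ∈ T, s * t ∈ m := by
  classical
  choose! g hgS hgm using hT
  refine ⟨∏ t ∈ T, g t, S.prod_mem hgS, fun t ht => ?_⟩
  rw [← Finset.mul_prod_erase T g ht, mul_right_comm]
  exact hm _ (hgm t ht) _

theorem exists_saturation_eq_resid (hm : IsRightIdeal m) {T : Finset M}
    (hT : saturation S m = {y : M | ∃ t ∈ T, ∃ n : M, y = t * n}) :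
    ∃ s ∈ S, saturation S m = resid m s := by
  have hTsat : ∀ t ∈ T, t ∈ saturation S m := fun t ht => hT ▸ ⟨t, ht, 1, (mul_one t).symm⟩
  obtain ⟨s, hs, hsT⟩ := exists_mem_forall_mul_mem hm T hTsat
  refine ⟨s, hs, subset_antisymm ?_ (resid_subset_saturation hs)⟩
  rw [hT]
  rintro _ ⟨t, ht, n, rfl⟩
  exact (mul_assoc s t n ▸ hm _ (hsT t ht) n : s * (t * n) ∈ m)

theorem locMap_preimage_locPush_eq_saturation (hm : IsRightIdeal m) :
    locMap S ⁻¹' locPush S m = saturation S m := by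
  ext x
  constructor
  · rintro ⟨a, ha, n, hn⟩
    induction n using Localization.induction_on with
    | H p =>
      obtain ⟨b, t⟩ := p
      have hx : Localization.mk x 1 = Localization.mk (a * b) t := by
        simpa [locMap, Localization.mk_mul] using hn
      obtain ⟨c, hc⟩ := (Localization.r_iff_exists).1 (Localization.mk_eq_mk_iff.1 hx)
      refine ⟨c * t, S.mul_mem c.2 t.2, ?_⟩
      have : (c * t : M) * x = a * (b * c) := by
        simpa [mul_comm, mul_left_comm, mul_assoc] using hc
      exact this ▸ hm a ha _
  · rintro ⟨s, hs, hsx⟩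
    refine ⟨s * x, hsx, Localization.mk 1 ⟨s, hs⟩, ?_⟩
    rw [locMap, Localization.mk_mul, Localization.mk_eq_mk_iff, Localization.r_iff_exists]
    exact ⟨1, by simp [mul_comm]⟩

end

theorem pull_push_eq_resid_of_sNoetherian {M : Type*} [CommMonoid M]
    (hNoeth : ∀ I : Set M, IsRightIdeal I →
      ∃ T : Finset M, I = {y : M | ∃ t ∈ T, ∃ n : M, y = t * n})
    (S : Submonoid M) (m : Set M) (hm : IsRightIdeal m) :
    ∃ s ∈ S, locMap S ⁻¹' (locPush S m) = resid m s := by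
  obtain ⟨T, hT⟩ := hNoeth _ (hm.saturation S)
  obtain ⟨s, hs, hsat⟩ := exists_saturation_eq_resid hm hT
  exact ⟨s, hs, (locMap_preimage_locPush_eq_saturation hm).trans hsat⟩
end

section
/- Let M be a commutative monoid, F a Grothendieck topology on M, 𝔠 an ideal of M, and 𝔞 an ideal maximal among ideals containing 𝔠 and not belonging to F. Then 𝔞 is a prime ideal. -/
def IsGTop {M : Type*} [Monoid M] (F : Set (Set M)) : Prop :=
  (∀ I ∈ F, IsRightIdeal I) ∧ Set.univ ∈ F ∧
  (∀ I ∈ F, ∀ m : M, resid I m ∈ F) ∧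
  (∀ I : Set M, IsRightIdeal I → ∀ J ∈ F, (∀ m ∈ J, resid I m ∈ F) → I ∈ F)


def IsPrimeIdeal {M : Type*} [CommMonoid M] (I : Set M) : Prop :=
  IsRightIdeal I ∧ I ≠ Set.univ ∧ ∀ a b : M, a * b ∈ I → a ∈ I ∨ b ∈ I

/-! Both ideals `{m | (𝔞 : m) ∈ F}` and `(𝔞 : x)` contain `𝔞`, hence `𝔠`. The first is not in `F`
by the gluing axiom (it covers `𝔞` by itself), so maximality makes it equal to `𝔞`: thus `x ∉ 𝔞`
forces `(𝔞 : x) ∉ F`, and maximality again gives `(𝔞 : x) = 𝔞`, i.e. `xy ∈ 𝔞 → y ∈ 𝔞`. -/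

section Monoid

variable {M : Type*} [Monoid M] {I : Set M}

theorem resid_mul (I : Set M) (m n : M) : resid I (m * n) = resid (resid I m) n := by
  ext x
  simp only [resid, Set.mem_ofPred_eq, mul_assoc]

theorem isRightIdeal_resid (hI : IsRightIdeal I) (m : M) : IsRightIdeal (resid I m) :=
  fun x hx y => by
    change m * (x * y) ∈ I
    rw [← mul_assoc]
    exact hI _ hx y

theorem resid_eq_univ_of_mem (hI : IsRightIdeal I) {m : M} (hm : m ∈ I) :
    resid I m = Set.univ :=
  Set.eq_univ_of_forall (hI m hm)

variable {F : Set (Set M)}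

theorem IsGTop.isRightIdeal_setOf_resid_mem (hF : IsGTop F) (I : Set M) :
    IsRightIdeal {m | resid I m ∈ F} := fun m hm n => by
  change resid I (m * n) ∈ F
  rw [resid_mul]
  exact hF.2.2.1 _ hm n

theorem IsGTop.subset_setOf_resid_mem (hF : IsGTop F) (hI : IsRightIdeal I) :
    I ⊆ {m | resid I m ∈ F} := fun m hm => by
  change resid I m ∈ F
  rw [resid_eq_univ_of_mem hI hm]
  exact hF.2.1

theorem IsGTop.setOf_resid_mem_notMem (hF : IsGTop F) (hI : IsRightIdeal I) (hIF : I ∉ F) :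
    {m | resid I m ∈ F} ∉ F :=
  fun h => hIF (hF.2.2.2 I hI _ h fun _ hm => hm)

end Monoid

theorem subset_resid {M : Type*} [CommMonoid M] {I : Set M} (hI : IsRightIdeal I)
    (m : M) : I ⊆ resid I m := fun x hx => by
  change m * x ∈ I
  rw [mul_comm]
  exact hI x hx m

theorem maximal_not_in_topology_is_prime_general {M : Type*} [CommMonoid M]
    (F : Set (Set M)) (hF : IsGTop F) (c a : Set M)
    (ha : IsRightIdeal a)
    (hca : c ⊆ a) (haF : a ∉ F)
    (hmax : ∀ b : Set M, IsRightIdeal b → c ⊆ b → b ∉ F → a ⊆ b → b = a) :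
    IsPrimeIdeal a := by
  have hmax' : ∀ b, IsRightIdeal b → b ∉ F → a ⊆ b → b = a := fun b hb hbF hab =>
    hmax b hb (hca.trans hab) hbF hab
  have hcover : {m | resid a m ∈ F} = a :=
    hmax' _ (hF.isRightIdeal_setOf_resid_mem a) (hF.setOf_resid_mem_notMem ha haF)
      (hF.subset_setOf_resid_mem ha)
  refine ⟨ha, fun h => haF (h ▸ hF.2.1), fun x y hxy => or_iff_not_imp_left.2 fun hx => ?_⟩
  have hxF : resid a x ∉ F := fun h => hx (hcover ▸ h)
  have hresid : resid a x = a := hmax' _ (isRightIdeal_resid ha x) hxF (subset_resid ha x)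
  exact hresid ▸ hxy

theorem maximal_not_in_topology_is_prime {M : Type*} [CommMonoid M]
    (F : Set (Set M)) (hF : IsGTop F) (c a : Set M)
    (hc : IsRightIdeal c) (ha : IsRightIdeal a)
    (hca : c ⊆ a) (haF : a ∉ F)
    (hmax : ∀ b : Set M, IsRightIdeal b → c ⊆ b → b ∉ F → a ⊆ b → b = a) :
    IsPrimeIdeal a :=
  maximal_not_in_topology_is_prime_general F hF c a ha hca haF hmax
end

section
/- Let M be a commutative monoid such that M/M× is finitely generated, where M× is the group of units. Then for every prime ideal 𝔭 of M there exists f ∈ M such that D(f) = {𝔮 ∈ Spec(M) | f ∉ 𝔮} equals {𝔮 ∈ Spec(M) | 𝔮 ⊆ 𝔭}; consequently, the Zariski topology on Spec(M) coincides with the order topology (open sets are downward-closed sets). -/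
section

variable {M : Type*} [CommMonoid M] {p q : Set M}

theorem IsRightIdeal.mul_mem_left (hp : IsRightIdeal p) {a : M} (b : M) (ha : a ∈ p) :
    b * a ∈ p :=
  mul_comm a b ▸ hp a ha b

theorem IsRightIdeal.left_notMem_of_mul_notMem (hp : IsRightIdeal p) {a b : M}
    (hab : a * b ∉ p) : a ∉ p :=
  fun ha => hab (hp a ha b)

theorem IsRightIdeal.right_notMem_of_mul_notMem (hp : IsRightIdeal p) {a b : M}
    (hab : a * b ∉ p) : b ∉ p :=
  fun hb => hab (hp.mul_mem_left a hb)

namespace IsPrimeIdeal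

theorem one_notMem (hq : IsPrimeIdeal q) : (1 : M) ∉ q :=
  fun h => hq.2.1 (Set.eq_univ_of_forall fun x => one_mul x ▸ hq.1 1 h x)

theorem notMem_of_isUnit (hq : IsPrimeIdeal q) {u : M} (hu : IsUnit u) : u ∉ q := by
  obtain ⟨v, rfl⟩ := hu
  intro hv
  exact hq.one_notMem (v.mul_inv ▸ hq.1 _ hv _)

theorem prod_notMem (hq : IsPrimeIdeal q) {ι : Type*} (s : Finset ι) {g : ι → M}
    (hs : ∀ i ∈ s, g i ∉ q) : ∏ i ∈ s, g i ∉ q := by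
  classical
  induction s using Finset.induction_on with
  | empty => simpa using hq.one_notMem
  | insert i s hi ih =>
    rw [Finset.prod_insert hi]
    intro hmem
    rcases hq.2.2 _ _ hmem with h | h
    · exact hs i (Finset.mem_insert_self i s) h
    · exact ih (fun j hj => hs j (Finset.mem_insert_of_mem hj)) h

theorem exists_generator_mem_diff (hq : IsPrimeIdeal q) (hp : IsRightIdeal p) {S : Set M}
    {m : M} (hm : m ∈ Submonoid.closure (S ∪ {u : M | IsUnit u})) (hmq : m ∈ q)
    (hmp : m ∉ p) : ∃ t ∈ S, t ∈ q ∧ t ∉ p := by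
  induction hm using Submonoid.closure_induction with
  | mem x hx =>
    rcases hx with hxS | hxu
    · exact ⟨x, hxS, hmq, hmp⟩
    · exact absurd hmq (hq.notMem_of_isUnit hxu)
  | one => exact absurd hmq hq.one_notMem
  | mul a b _ _ iha ihb =>
    rcases hq.2.2 a b hmq with haq | hbq
    · exact iha haq (hp.left_notMem_of_mul_notMem hmp)
    · exact ihb hbq (hp.right_notMem_of_mul_notMem hmp)

end IsPrimeIdeal

theorem exists_notMem_iff_subset (T : Finset M)
    (hT : ∀ m : M, m ∈ Submonoid.closure ((↑T : Set M) ∪ {u : M | IsUnit u}))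
    (hp : IsRightIdeal p) :
    ∃ f : M, ∀ q : Set M, IsPrimeIdeal q → (f ∉ q ↔ q ⊆ p) := by
  classical
  refine ⟨∏ t ∈ T.filter (· ∉ p), t, fun q hq => ⟨fun hf m hmq => ?_, fun hqp => ?_⟩⟩
  · by_contra hmp
    obtain ⟨t, htT, htq, htp⟩ := hq.exists_generator_mem_diff hp (hT m) hmq hmp
    have ht : t ∈ T.filter (· ∉ p) := Finset.mem_filter.mpr ⟨htT, htp⟩
    exact hf (Finset.mul_prod_erase _ id ht ▸ hq.1 t htq _)
  · exact hq.prod_notMem _ fun t ht htq => (Finset.mem_filter.mp ht).2 (hqp htq)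

end

theorem zariski_eq_order_topology {M : Type*} [CommMonoid M]
    (hfg : ∃ T : Finset M, ∀ m : M,
      m ∈ Submonoid.closure ((↑T : Set M) ∪ {u : M | IsUnit u})) :
    (∀ p : Set M, IsPrimeIdeal p → ∃ f : M,
        {q : Set M | IsPrimeIdeal q ∧ f ∉ q} =
          {q : Set M | IsPrimeIdeal q ∧ q ⊆ p}) ∧
      (∀ P : Set (Set M), (∀ q ∈ P, IsPrimeIdeal q) →
        (∀ q ∈ P, ∀ r : Set M, IsPrimeIdeal r → r ⊆ q → r ∈ P) →
        ∀ q ∈ P, ∃ f : M, f ∉ q ∧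
          ∀ r : Set M, IsPrimeIdeal r → f ∉ r → r ∈ P) := by
  obtain ⟨T, hT⟩ := hfg
  refine ⟨fun p hp => ?_, fun P hP hdown q hqP => ?_⟩
  · obtain ⟨f, hf⟩ := exists_notMem_iff_subset T hT hp.1
    exact ⟨f, Set.ext fun q => and_congr_right (hf q)⟩
  · obtain ⟨f, hf⟩ := exists_notMem_iff_subset T hT (hP q hqP).1
    exact ⟨f, (hf q (hP q hqP)).2 subset_rfl,
      fun r hr hfr => hdown q hqP r hr ((hf r hr).1 hfr)⟩
end

section
/- Let M be a commutative monoid, Υ : P(Spec M) → Top(M) defined by Υ(P) = {ideals 𝔞 | V(𝔞) ∩ P = ∅}, and Ξ : Top(M) → P(Spec M) defined by Ξ(F) = {𝔭 ∈ Spec M | 𝔭 ∉ F}. Then (Υ, Ξ) is a Galois connection: for any subset P of Spec(M) and any Grothendieck topology F on M, F ⊆ Υ(P) if and only if P ⊆ Ξ(F). -/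
theorem IsRightIdeal.resid_eq_univ {M : Type*} [Monoid M] {I : Set M} (hI : IsRightIdeal I)
    {m : M} (hm : m ∈ I) : resid I m = Set.univ :=
  Set.eq_univ_of_forall (hI m hm)

theorem IsGTop.mem_of_subset {M : Type*} [Monoid M] {F : Set (Set M)} (hF : IsGTop F)
    {I J : Set M} (hI : IsRightIdeal I) (hJ : J ∈ F) (hJI : J ⊆ I) : I ∈ F :=
  hF.2.2.2 I hI J hJ fun _ hm => hI.resid_eq_univ (hJI hm) ▸ hF.2.1

theorem galois_connection_topologies_primes {M : Type*} [CommMonoid M]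
    (P : Set (Set M)) (hP : ∀ p ∈ P, IsPrimeIdeal p)
    (F : Set (Set M)) (hF : IsGTop F) :
    F ⊆ {a : Set M | IsRightIdeal a ∧ ∀ p ∈ P, ¬ a ⊆ p} ↔
      P ⊆ {p : Set M | IsPrimeIdeal p ∧ p ∉ F} := by
  constructor
  · intro hFP p hp
    exact ⟨hP p hp, fun hpF => (hFP hpF).2 p hp subset_rfl⟩
  · intro hPF a ha
    exact ⟨hF.1 a ha, fun p hp hap => (hPF hp).2 (hF.mem_of_subset (hP p hp).1 ha hap)⟩
end

section
/- Let M be a commutative monoid and P a subset of Spec(M). Then Ξ(Υ(P)) = {𝔮 ∈ Spec(M) | ∃ 𝔭 ∈ P, 𝔮 ⊆ 𝔭}, the downward closure of P. In particular, P is stable under the Galois connection (Υ, Ξ) if and only if P is downward closed (i.e., open in the order topology). -/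
/-! An ideal lies outside `Υ(P)` exactly when it sits below some member of `P`, so `Ξ(Υ(P))`
is the downward closure of `P` in `Spec(M)`; and a subset of a preordered set `S` equals its
downward closure in `S` exactly when it is downward closed in `S`. -/

theorem eq_sep_exists_le_iff {α : Type*} [Preorder α] {S P : Set α} (hP : P ⊆ S) :
    P = {q | q ∈ S ∧ ∃ p ∈ P, q ≤ p} ↔ ∀ q p, q ∈ S → p ∈ P → q ≤ p → q ∈ P := by
  constructor
  · intro hPeq q p hq hp hqp
    rw [hPeq]
    exact ⟨hq, p, hp, hqp⟩
  · intro hdown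
    ext q
    exact ⟨fun hq => ⟨hP hq, q, hq, le_rfl⟩, fun ⟨hq, p, hp, hqp⟩ => hdown q p hq hp hqp⟩

section GaloisConnection

variable {M : Type*} [CommMonoid M]

def upsilon (P : Set (Set M)) : Set (Set M) := {a | IsRightIdeal a ∧ ∀ p ∈ P, ¬ a ⊆ p}

def xi (F : Set (Set M)) : Set (Set M) := {q | IsPrimeIdeal q ∧ q ∉ F}

theorem not_mem_upsilon_iff {P : Set (Set M)} {a : Set M} (ha : IsRightIdeal a) :
    a ∉ upsilon P ↔ ∃ p ∈ P, a ⊆ p := by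
  simp [upsilon, ha]

theorem xi_upsilon_eq (P : Set (Set M)) :
    xi (upsilon P) = {q | IsPrimeIdeal q ∧ ∃ p ∈ P, q ⊆ p} := by
  ext q
  exact and_congr_right fun hq => not_mem_upsilon_iff hq.1

end GaloisConnection

theorem stable_iff_downward_closed {M : Type*} [CommMonoid M]
    (P : Set (Set M)) (hP : ∀ p ∈ P, IsPrimeIdeal p) :
    {q : Set M | IsPrimeIdeal q ∧
        q ∉ {a : Set M | IsRightIdeal a ∧ ∀ p ∈ P, ¬ a ⊆ p}} =
      {q : Set M | IsPrimeIdeal q ∧ ∃ p ∈ P, q ⊆ p} ∧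
    (P = {q : Set M | IsPrimeIdeal q ∧
        q ∉ {a : Set M | IsRightIdeal a ∧ ∀ p ∈ P, ¬ a ⊆ p}} ↔
      ∀ q p : Set M, IsPrimeIdeal q → p ∈ P → q ⊆ p → q ∈ P) := by
  have hclosure : xi (upsilon P) = {q | IsPrimeIdeal q ∧ ∃ p ∈ P, q ⊆ p} := xi_upsilon_eq P
  refine ⟨hclosure, ?_⟩
  change P = xi (upsilon P) ↔ _
  rw [hclosure]
  exact eq_sep_exists_le_iff (S := {q | IsPrimeIdeal q}) hP
end
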